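/- arXiv:2405.13798 — 3 statements merged into one kernel-verified Lean document; each statement's English description precedes it below -/
import Mathlib

section
/- Let (Ω, F, P) be a probability space with a filtration (F_n)_{n≥1} (set F_0 to be the trivial σ-algebra), and let (Z_n)_{n≥1} be a sequence of real-valued random variables such that Z_n is F_n-measurable and |Z_n| ≤ G almost surely for a fixed constant G < ∞. Define μ_n = E[Z_n | F_{n−1}] and S_n = Σ_{m=1}^n Z_m. If the averaged conditional means (1/n) Σ_{m=1}^n μ_m converge in probability to a random variable μ, then (1/n) S_n converges in probability to μ: for every ε > 0, lim_{n→∞} P(|(1/n) S_n − μ| > ε) = 0. -/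
/-!
Doob's decomposition writes the partial sums `S n = ∑_{m ≤ n} Z m` as a martingale `M` plus the
predictable part `∑_{m ≤ n} E[Z m | F_{m-1}]`. The increments of `M` are bounded by `2 G` and
orthogonal in `L²`, so `E[M n ^ 2] ≤ n (2 G) ^ 2`; by Chebyshev `M n / n → 0` in probability, and
adding the assumed convergence of the averaged predictable part gives the claim.
-/

open MeasureTheory Filter Finset

open scoped Topology

namespace MeasureTheory

variable {Ω : Type*} {m m0 : MeasurableSpace Ω} {μ : Measure Ω}

theorem integral_mul_eq_zero_of_condExp_eq_zero [IsFiniteMeasure μ] {f g : Ω → ℝ} (hm : m ≤ m0)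
    (hf : StronglyMeasurable[m] f) (hfg : Integrable (f * g) μ) (hg : Integrable g μ)
    (hg0 : μ[g | m] =ᵐ[μ] 0) : ∫ ω, f ω * g ω ∂μ = 0 := by
  rw [← integral_condExp hm]
  refine integral_eq_zero_of_ae ((condExp_mul_of_stronglyMeasurable_left hf hfg hg).trans ?_)
  filter_upwards [hg0] with ω hω
  simp [hω]

theorem meas_ge_le_integral_sq_div_sq [IsFiniteMeasure μ] {f : Ω → ℝ}
    (hf : Integrable (fun ω => f ω ^ 2) μ) {ε : ℝ} (hε : 0 < ε) :
    μ {ω | ε ≤ |f ω|} ≤ ENNReal.ofReal ((∫ ω, f ω ^ 2 ∂μ) / ε ^ 2) := by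
  have hmarkov := mul_meas_ge_le_integral_of_nonneg
    (Eventually.of_forall fun ω => sq_nonneg (f ω)) hf (ε ^ 2)
  have hsets : {ω | ε ≤ |f ω|} = {ω | ε ^ 2 ≤ f ω ^ 2} := by
    ext ω
    rw [Set.mem_ofPred_eq, Set.mem_ofPred_eq,
      ← pow_le_pow_iff_left₀ hε.le (abs_nonneg _) two_ne_zero, sq_abs]
  rw [hsets, ← ofReal_measureReal]
  gcongr
  rw [le_div_iff₀ (by positivity), mul_comm]
  exact hmarkov

theorem memLp_of_bdd_difference {E : Type*} [NormedAddCommGroup E] [IsFiniteMeasure μ]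
    {p : ENNReal} {R : ℝ} {M : ℕ → Ω → E} (hM : ∀ n, AEStronglyMeasurable (M n) μ)
    (hM0 : MemLp (M 0) p μ) (hbdd : ∀ᵐ ω ∂μ, ∀ i, ‖M (i + 1) ω - M i ω‖ ≤ R) (n : ℕ) :
    MemLp (M n) p μ := by
  induction n with
  | zero => exact hM0
  | succ n ih =>
    have hdiff : MemLp (M (n + 1) - M n) p μ :=
      .of_bound ((hM (n + 1)).sub (hM n)) R (hbdd.mono fun ω hω => hω n)
    simpa using ih.add hdiff

variable {ℱ : Filtration ℕ m0} {M : ℕ → Ω → ℝ} {R : ℝ}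

theorem Martingale.integral_sq_le_of_bdd_difference [IsProbabilityMeasure μ]
    (hM : Martingale M ℱ μ) (hM0 : MemLp (M 0) 2 μ)
    (hbdd : ∀ᵐ ω ∂μ, ∀ i, ‖M (i + 1) ω - M i ω‖ ≤ R) (n : ℕ) :
    ∫ ω, M n ω ^ 2 ∂μ ≤ ∫ ω, M 0 ω ^ 2 ∂μ + n * R ^ 2 := by
  have hL2 := memLp_of_bdd_difference (fun n => (hM.integrable n).1) hM0 hbdd
  induction n with
  | zero => simp
  | succ n ih =>
    set D := M (n + 1) - M n
    have hD : MemLp D 2 μ := (hL2 (n + 1)).sub (hL2 n)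
    have hcross : ∫ ω, M n ω * D ω ∂μ = 0 := by
      refine integral_mul_eq_zero_of_condExp_eq_zero (ℱ.le n) (hM.stronglyMeasurable n)
        ((hL2 n).integrable_mul hD) (hD.integrable one_le_two) ?_
      filter_upwards [condExp_sub (hM.integrable (n + 1)) (hM.integrable n) (ℱ n),
        hM.condExp_ae_eq n.le_succ, (condExp_of_stronglyMeasurable (ℱ.le n)
          (hM.stronglyMeasurable n) (hM.integrable n)).eventuallyEq] with ω h1 h2 h3
      simp [D, h1, h2, h3]
    have hD_sq : ∫ ω, D ω ^ 2 ∂μ ≤ R ^ 2 := by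
      refine (integral_mono_ae hD.integrable_sq (integrable_const (R ^ 2)) ?_).trans (by simp)
      filter_upwards [hbdd] with ω hω
      rw [← sq_abs]
      exact pow_le_pow_left₀ (abs_nonneg _) (hω n) 2
    calc ∫ ω, M (n + 1) ω ^ 2 ∂μ
        = ∫ ω, M n ω ^ 2 + 2 * (M n ω * D ω) + D ω ^ 2 ∂μ := by
          congr 1; ext ω; simp only [D, Pi.sub_apply]; ring
      _ = ∫ ω, M n ω ^ 2 ∂μ + 2 * ∫ ω, M n ω * D ω ∂μ + ∫ ω, D ω ^ 2 ∂μ := by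
          have hMD : Integrable (fun ω => M n ω * D ω) μ := (hL2 n).integrable_mul hD
          have hsum : Integrable (fun ω => M n ω ^ 2 + 2 * (M n ω * D ω)) μ :=
            (hL2 n).integrable_sq.add (hMD.const_mul 2)
          rw [integral_add hsum hD.integrable_sq,
            integral_add (hL2 n).integrable_sq (hMD.const_mul 2), integral_const_mul]
      _ ≤ ∫ ω, M 0 ω ^ 2 ∂μ + (n + 1 : ℕ) * R ^ 2 := by
          rw [hcross]; push_cast; linarith

theorem Martingale.tendsto_measure_lt_abs_div_of_bdd_difference [IsProbabilityMeasure μ]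
    (hM : Martingale M ℱ μ) (hM0 : M 0 = 0)
    (hbdd : ∀ᵐ ω ∂μ, ∀ i, ‖M (i + 1) ω - M i ω‖ ≤ R) {ε : ℝ} (hε : 0 < ε) :
    Tendsto (fun n : ℕ => μ {ω | ε < |(1 / (n : ℝ)) * M n ω|}) atTop (𝓝 0) := by
  have hM0L2 : MemLp (M 0) 2 μ := hM0 ▸ MemLp.zero
  have hL2 := memLp_of_bdd_difference (fun n => (hM.integrable n).1) hM0L2 hbdd
  have hbound : ∀ n : ℕ, μ {ω | ε < |(1 / (n : ℝ)) * M n ω|}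
      ≤ ENNReal.ofReal (R ^ 2 / ε ^ 2 * (1 / n)) := by
    intro n
    have hsq : ∫ ω, ((1 / (n : ℝ)) * M n ω) ^ 2 ∂μ ≤ R ^ 2 * (1 / n) := by
      have h : ∫ ω, M n ω ^ 2 ∂μ ≤ n * R ^ 2 := by
        simpa [hM0] using hM.integral_sq_le_of_bdd_difference hM0L2 hbdd n
      simp_rw [mul_pow, integral_const_mul]
      rcases n.eq_zero_or_pos with rfl | hn
      · simp
      calc (1 / (n : ℝ)) ^ 2 * ∫ ω, M n ω ^ 2 ∂μ ≤ (1 / (n : ℝ)) ^ 2 * (n * R ^ 2) := by gcongr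
        _ = R ^ 2 * (1 / n) := by field_simp
    calc μ {ω | ε < |(1 / (n : ℝ)) * M n ω|}
        ≤ μ {ω | ε ≤ |(1 / (n : ℝ)) * M n ω|} :=
          measure_mono (Set.ofPred_subset_ofPred.2 fun _ => le_of_lt)
      _ ≤ ENNReal.ofReal ((∫ ω, ((1 / (n : ℝ)) * M n ω) ^ 2 ∂μ) / ε ^ 2) :=
          meas_ge_le_integral_sq_div_sq ((hL2 n).const_mul _).integrable_sq hε
      _ ≤ ENNReal.ofReal (R ^ 2 / ε ^ 2 * (1 / n)) := by
          gcongr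
          rw [div_mul_eq_mul_div]
          gcongr
  have hlim : Tendsto (fun n : ℕ => ENNReal.ofReal (R ^ 2 / ε ^ 2 * (1 / n))) atTop (𝓝 0) := by
    simpa using ENNReal.tendsto_ofReal
      (tendsto_one_div_atTop_nhds_zero_nat.const_mul (R ^ 2 / ε ^ 2))
  exact tendsto_of_tendsto_of_tendsto_of_le_of_le tendsto_const_nhds hlim (fun _ => bot_le)
    hbound

theorem tendsto_measure_lt_abs_add {f g : ℕ → Ω → ℝ}
    (hf : ∀ ε : ℝ, 0 < ε → Tendsto (fun n => μ {ω | ε < |f n ω|}) atTop (𝓝 0))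
    (hg : ∀ ε : ℝ, 0 < ε → Tendsto (fun n => μ {ω | ε < |g n ω|}) atTop (𝓝 0))
    {ε : ℝ} (hε : 0 < ε) :
    Tendsto (fun n => μ {ω | ε < |f n ω + g n ω|}) atTop (𝓝 0) := by
  have hsplit : ∀ n,
      {ω | ε < |f n ω + g n ω|} ⊆ {ω | ε / 2 < |f n ω|} ∪ {ω | ε / 2 < |g n ω|} := by
    intro n ω hω
    by_contra! h
    simp only [Set.mem_union, Set.mem_ofPred_eq, not_or, not_lt] at h hω
    linarith [abs_add_le (f n ω) (g n ω)]
  have hsum := (hf _ (half_pos hε)).add (hg _ (half_pos hε))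
  rw [add_zero] at hsum
  exact tendsto_of_tendsto_of_tendsto_of_le_of_le tendsto_const_nhds hsum (fun _ => bot_le)
    fun n => (measure_mono (hsplit n)).trans (measure_union_le _ _)

theorem predictablePart_sum_Icc (Z : ℕ → Ω → ℝ) (n : ℕ) :
    predictablePart (fun n => ∑ m ∈ Icc 1 n, Z m) ℱ μ n = ∑ m ∈ Icc 1 n, μ[Z m | ℱ (m - 1)] := by
  induction n with
  | zero => simp
  | succ n ih =>
    rw [predictablePart_add_one, ih, sum_Icc_succ_top (by omega), sum_Icc_succ_top (by omega),
      add_sub_cancel_left, Nat.add_sub_cancel]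

end MeasureTheory

theorem weak_law_of_large_numbers_dependent_general
    {Ω : Type*} {m0 : MeasurableSpace Ω} (μ : Measure Ω) [IsProbabilityMeasure μ]
    (ℱ : Filtration ℕ m0)
    (Z : ℕ → Ω → ℝ) (G : ℝ)
    (hmeas : ∀ n, 1 ≤ n → StronglyMeasurable[ℱ n] (Z n))
    (hbdd : ∀ n, 1 ≤ n → ∀ᵐ ω ∂μ, |Z n ω| ≤ G)
    (μ' : ℕ → Ω → ℝ) (hμ' : ∀ n, μ' n = μ[Z n | ℱ (n - 1)])
    (μlim : Ω → ℝ)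
    (hconv : ∀ ε : ℝ, 0 < ε →
      Tendsto (fun n : ℕ => μ {ω | ε < |(1 / (n : ℝ)) * ∑ m ∈ Icc 1 n, μ' m ω - μlim ω|})
        atTop (nhds 0)) :
    ∀ ε : ℝ, 0 < ε →
      Tendsto (fun n : ℕ => μ {ω | ε < |(1 / (n : ℝ)) * ∑ m ∈ Icc 1 n, Z m ω - μlim ω|})
        atTop (nhds 0) := by
  set S : ℕ → Ω → ℝ := fun n => ∑ m ∈ Icc 1 n, Z m
  have hS_adapted : StronglyAdapted ℱ S := fun n =>
    Finset.stronglyMeasurable_sum _ fun m hm =>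
      (hmeas m (mem_Icc.1 hm).1).mono (ℱ.mono (mem_Icc.1 hm).2)
  have hS_int : ∀ n, Integrable (S n) μ := fun n =>
    integrable_finsetSum' _ fun m hm => .of_bound
      ((hmeas m (mem_Icc.1 hm).1).mono (ℱ.le m)).aestronglyMeasurable G (hbdd m (mem_Icc.1 hm).1)
  have hS_diff : ∀ᵐ ω ∂μ, ∀ i, ‖S (i + 1) ω - S i ω‖ ≤ G := by
    refine ae_all_iff.2 fun i => ?_
    filter_upwards [hbdd (i + 1) (by omega)] with ω hω
    simpa [S, sum_Icc_succ_top] using hω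
  have hmart := martingale_martingalePart hS_adapted hS_int
  have hdecomp : ∀ n ω,
      ∑ m ∈ Icc 1 n, Z m ω = martingalePart S ℱ μ n ω + ∑ m ∈ Icc 1 n, μ' m ω := fun n ω => by
    rw [← Finset.sum_apply, ← Finset.sum_apply, funext hμ', ← predictablePart_sum_Icc,
      ← Pi.add_apply (martingalePart S ℱ μ n), ← Pi.add_apply (martingalePart S ℱ μ),
      martingalePart_add_predictablePart]
  refine fun ε hε => (tendsto_measure_lt_abs_add
    (fun _ => hmart.tendsto_measure_lt_abs_div_of_bdd_difference (by simp [S])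
      (martingalePart_bdd_difference ℱ hS_diff)) hconv hε).congr fun n => ?_
  simp only [hdecomp, mul_add, add_sub_assoc]

/-- **A Weak Law of Large Numbers** for bounded adapted sequences with arbitrary dependence.
Let `(Ω, F, P)` be a probability space with filtration `(F_n)` (with `F_0` trivial), and
`(Z_n)_{n ≥ 1}` real random variables with `Z_n` being `F_n`-measurable and `|Z_n| ≤ G` a.s.,
and let `μ_n = E[Z_n | F_{n-1}]`, `S_n = ∑_{m=1}^n Z_m`. If the averaged conditional means
`(1/n) ∑_{m=1}^n μ_m` converge in probability to a random variable `μlim`, then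
`(1/n) S_n` converges in probability to `μlim`. -/
theorem weak_law_of_large_numbers_dependent
    {Ω : Type*} {m0 : MeasurableSpace Ω} (μ : Measure Ω) [IsProbabilityMeasure μ]
    (ℱ : Filtration ℕ m0) (hℱ0 : ℱ 0 = ⊥)
    (Z : ℕ → Ω → ℝ) (G : ℝ)
    (hmeas : ∀ n, 1 ≤ n → StronglyMeasurable[ℱ n] (Z n))
    (hbdd : ∀ n, 1 ≤ n → ∀ᵐ ω ∂μ, |Z n ω| ≤ G)
    (μ' : ℕ → Ω → ℝ) (hμ' : ∀ n, μ' n = μ[Z n | ℱ (n - 1)])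
    (μlim : Ω → ℝ)
    (hconv : ∀ ε : ℝ, 0 < ε →
      Tendsto (fun n : ℕ => μ {ω | ε < |(1 / (n : ℝ)) * ∑ m ∈ Icc 1 n, μ' m ω - μlim ω|})
        atTop (nhds 0)) :
    ∀ ε : ℝ, 0 < ε →
      Tendsto (fun n : ℕ => μ {ω | ε < |(1 / (n : ℝ)) * ∑ m ∈ Icc 1 n, Z m ω - μlim ω|})
        atTop (nhds 0) :=
  weak_law_of_large_numbers_dependent_general μ ℱ Z G hmeas hbdd μ' hμ' μlim hconv
end

section
/- Let Y be a finite nonempty set. For each n ≥ 1 let P_n be a probability mass function on Y^n, let h_n : Y^n → ℝ be a function, let G(n) ⊆ Y^n be a nonempty subset with g(n) = (1/n) log₂ |G(n)|, and define l_n(y) = −(1/n) log₂ P_n(y) for y with P_n(y) > 0. Assume: (i) there is p_G > 0 with P_n(G(n)) ≥ p_G for all n; (ii) for every δ > 0, lim_{n→∞} P_n({ y : P_n(y) > 0 and |l_n(y) − h_n(y)| > δ }) = 0. Then for every ε > 0, lim_{n→∞} P_n({ y ∈ G(n) : h_n(y) > g(n) + ε }) / P_n(G(n)) = 0; that is, conditioned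 on producing a grammatical string, the probability that the empirical entropy exceeds g(n) + ε tends to zero. -/
open Finset Filter
open scoped Classical

/-!
Split the grammatical strings of high empirical entropy into those violating the
Un-Equipartition Property with tolerance `ε / 2`, whose total mass tends to zero, and the rest.
For the rest the log-perplexity exceeds `g(n) + ε / 2`, so each has probability below
`2^(-n ε / 2) / |G(n)|`; there are at most `|G(n)|` of them, so their total mass is at most
`2^(-n ε / 2)`. Dividing by `P_n(G(n)) ≥ p_G` keeps both parts tending to zero.
-/

noncomputable def logPerplexity (n : ℕ) (p : ℝ) : ℝ :=
  -(1 / (n : ℝ)) * Real.logb 2 p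

theorem Finset.sum_le_of_le_div_card {α : Type*} {s t : Finset α} {f : α → ℝ} {c : ℝ}
    (hts : t ⊆ s) (hc : 0 ≤ c) (hf : ∀ y ∈ t, f y ≤ c / #s) : ∑ y ∈ t, f y ≤ c := by
  calc ∑ y ∈ t, f y ≤ #t • (c / #s) := sum_le_card_nsmul t f _ hf
    _ ≤ c := by
      rw [nsmul_eq_mul]
      rcases (#s).eq_zero_or_pos with hs | hs
      · simp [hs, hc]
      · rw [mul_div_left_comm]
        exact mul_le_of_le_one_right hc <|
          div_le_one_of_le₀ (by exact_mod_cast card_le_card hts) (by positivity)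

theorem lt_of_add_lt_logPerplexity {n m : ℕ} {p η : ℝ} (hn : 0 < n) (hm : 0 < m) (hp : 0 < p)
    (hlp : (1 / (n : ℝ)) * Real.logb 2 m + η < logPerplexity n p) :
    p < ((2 : ℝ) ^ (-η)) ^ n / m := by
  have hm' : (0 : ℝ) < m := by exact_mod_cast hm
  have hlog : Real.logb 2 p < Real.logb 2 (((2 : ℝ) ^ (-η)) ^ n / m) := by
    rw [Real.logb_div (by positivity) hm'.ne', Real.logb_pow,
      Real.logb_rpow (by norm_num) (by norm_num)]
    unfold logPerplexity at hlp
    have hn' : (0 : ℝ) < n := by exact_mod_cast hn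
    field_simp at hlp
    linarith
  exact (Real.logb_lt_logb_iff (by norm_num) hp (by positivity)).1 hlog

section SingleLength

variable {α : Type*} {p h : α → ℝ} {G : Finset α} {n : ℕ}

theorem le_div_card_of_not_nonequipartition {δ ε : ℝ} {y : α} (hn : 0 < n) (hpy : 0 ≤ p y)
    (hyG : y ∈ G) (hyh : (1 / (n : ℝ)) * Real.logb 2 #G + ε < h y)
    (hyA : ¬ (0 < p y ∧ δ < |logPerplexity n (p y) - h y|)) :
    p y ≤ ((2 : ℝ) ^ (-(ε - δ))) ^ n / #G := by
  rcases hpy.eq_or_lt with hy0 | hypos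
  · rw [← hy0]
    positivity
  · have hclose := (abs_sub_le_iff.1 (not_lt.1 (not_and.1 hyA hypos))).2
    refine (lt_of_add_lt_logPerplexity hn (card_pos.2 ⟨y, hyG⟩) hypos ?_).le
    linarith

theorem sum_filter_entropy_gt_le [Fintype α] (hn : 0 < n) (hp : ∀ y, 0 ≤ p y) (δ ε : ℝ) :
    ∑ y ∈ G.filter (fun y => (1 / (n : ℝ)) * Real.logb 2 #G + ε < h y), p y ≤
      ∑ y ∈ univ.filter (fun y => 0 < p y ∧ δ < |logPerplexity n (p y) - h y|), p y +
        ((2 : ℝ) ^ (-(ε - δ))) ^ n := by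
  set S := G.filter (fun y => (1 / (n : ℝ)) * Real.logb 2 #G + ε < h y)
  set A := univ.filter (fun y => 0 < p y ∧ δ < |logPerplexity n (p y) - h y|)
  have hSA : ∑ y ∈ S ∩ A, p y ≤ ∑ y ∈ A, p y :=
    sum_le_sum_of_subset_of_nonneg inter_subset_right fun y _ _ => hp y
  have hSdiffA : ∑ y ∈ S \ A, p y ≤ ((2 : ℝ) ^ (-(ε - δ))) ^ n := by
    refine sum_le_of_le_div_card (sdiff_subset.trans (filter_subset _ _)) (by positivity) ?_
    intro y hy
    obtain ⟨hyS, hyA⟩ := mem_sdiff.1 hy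
    obtain ⟨hyG, hyh⟩ := mem_filter.1 hyS
    exact le_div_card_of_not_nonequipartition hn (hp y) hyG hyh (by simpa [A] using hyA)
  rw [← sum_inter_add_sum_sdiff S A]
  exact add_le_add hSA hSdiffA

end SingleLength

theorem empirical_entropy_not_too_large_general
    {Y : Type*} [Fintype Y]
    (P : (n : ℕ) → (Fin n → Y) → ℝ)
    (hP0 : ∀ n y, 0 ≤ P n y)
    (h : (n : ℕ) → (Fin n → Y) → ℝ)
    (G : (n : ℕ) → Finset (Fin n → Y))
    (pG : ℝ) (hpG : 0 < pG)
    (hPG : ∀ n, pG ≤ ∑ y ∈ G n, P n y)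
    (hUEP : ∀ δ : ℝ, 0 < δ →
      Tendsto (fun n : ℕ =>
          ∑ y ∈ univ.filter (fun y : Fin n → Y => 0 < P n y ∧
            δ < |(-(1 / (n : ℝ)) * Real.logb 2 (P n y)) - h n y|), P n y)
        atTop (nhds 0)) :
    ∀ ε : ℝ, 0 < ε →
      Tendsto (fun n : ℕ =>
          (∑ y ∈ (G n).filter (fun y =>
              (1 / (n : ℝ)) * Real.logb 2 ((G n).card : ℝ) + ε < h n y), P n y) /
            (∑ y ∈ G n, P n y))
        atTop (nhds 0) := by
  intro ε hε
  have hgeom : Tendsto (fun n : ℕ => ((2 : ℝ) ^ (-(ε - ε / 2))) ^ n) atTop (nhds 0) :=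
    tendsto_pow_atTop_nhds_zero_of_lt_one (by positivity)
      (Real.rpow_lt_one_of_one_lt_of_neg (by norm_num) (by linarith))
  have hbound := ((hUEP (ε / 2) (by positivity)).add hgeom).div_const pG
  rw [zero_add, zero_div] at hbound
  refine tendsto_of_tendsto_of_tendsto_of_le_of_le' tendsto_const_nhds hbound
    (Eventually.of_forall fun n => div_nonneg (sum_nonneg fun y _ => hP0 n y)
      (hpG.le.trans (hPG n))) ?_
  filter_upwards [eventually_gt_atTop 0] with n hn
  exact div_le_div₀ (add_nonneg (sum_nonneg fun y _ => hP0 n y) (by positivity))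
    (sum_filter_entropy_gt_le hn (hP0 n) (ε / 2) ε) hpG (hPG n)

/-- **Entropies cannot be too large.** Let `Y` be a finite nonempty token alphabet. For
each `n ≥ 1`, let `P_n` be a pmf on `Y^n` (the law of the model's length-`n` output),
`h_n : Y^n → ℝ` the empirical entropy, `G(n) ⊆ Y^n` nonempty with
`g(n) = (1/n) log₂ |G(n)|`, and `l_n(y) = −(1/n) log₂ P_n(y)`. Assume (i) `P_n(G(n)) ≥ p_G > 0`
for all `n`, and (ii) the Un-Equipartition Property: for every `δ > 0`,
`P_n(|l_n − h_n| > δ) → 0`. Then for every `ε > 0`, conditioned on producing a grammatical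
string, the probability that the empirical entropy exceeds `g(n) + ε` tends to zero. -/
theorem empirical_entropy_not_too_large
    {Y : Type*} [Fintype Y] [Nonempty Y]
    (P : (n : ℕ) → (Fin n → Y) → ℝ)
    (hP0 : ∀ n y, 0 ≤ P n y) (hP1 : ∀ n, ∑ y, P n y = 1)
    (h : (n : ℕ) → (Fin n → Y) → ℝ)
    (G : (n : ℕ) → Finset (Fin n → Y)) (hGne : ∀ n, (G n).Nonempty)
    (pG : ℝ) (hpG : 0 < pG)
    (hPG : ∀ n, pG ≤ ∑ y ∈ G n, P n y)
    (hUEP : ∀ δ : ℝ, 0 < δ →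
      Tendsto (fun n : ℕ =>
          ∑ y ∈ univ.filter (fun y : Fin n → Y => 0 < P n y ∧
            δ < |(-(1 / (n : ℝ)) * Real.logb 2 (P n y)) - h n y|), P n y)
        atTop (nhds 0)) :
    ∀ ε : ℝ, 0 < ε →
      Tendsto (fun n : ℕ =>
          (∑ y ∈ (G n).filter (fun y =>
              (1 / (n : ℝ)) * Real.logb 2 ((G n).card : ℝ) + ε < h n y), P n y) /
            (∑ y ∈ G n, P n y))
        atTop (nhds 0) :=
  empirical_entropy_not_too_large_general P hP0 h G pG hpG hPG hUEP
end

section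
/- Let Y be a finite nonempty set. For each n ≥ 1 let P_n be a probability mass function on Y^n, let h_n : Y^n → ℝ be a function, let G(n) ⊆ Y^n be a nonempty subset with g(n) = (1/n) log₂ |G(n)|, and define l_n(y) = −(1/n) log₂ P_n(y) for y with P_n(y) > 0. Fix ε > 0 and define the purged typical set 𝒫_n(ε) = { y ∈ G(n) : P_n(y) > 0, |l_n(y) − h_n(y)| < ε, and l_n(y) ≤ g(n) + ε/2 }. Assume: (i) there is p_G > 0 with P_n(G(n)) ≥ p_G for all n; (ii) for every δ > 0, lim_{n→∞} P_n({ y : P_n(y) > 0 and |l_n(y) − h_n(y)| > δ }) = 0. Then lim_{n→∞} P_n(𝒫_n(ε)) / P_n(G(n)) = 1. -/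
open Finset Filter
open scoped Classical
open Topology

/-!
Off the purged typical set, a grammatical string either has `|l_n − h_n| ≥ ε`, an event whose
probability tends to zero by the uniform equipartition hypothesis, or it has
`l_n > g(n) + ε/2`, i.e. probability below `|G(n)|⁻¹ 2^{-nε/2}`; there are at most `|G(n)|`
such strings, so their total mass is at most `2^{-nε/2}`. Since `P_n(G(n))` stays above `p_G`,
both losses vanish after dividing by `P_n(G(n))`.
-/

theorem lt_inv_mul_rpow_of_logb_gt {x N n a : ℝ} (hx : 0 < x) (hN : 0 < N) (hn : 0 < n)
    (h : 1 / n * Real.logb 2 N + a < -(1 / n) * Real.logb 2 x) :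
    x < N⁻¹ * 2 ^ (-(a * n)) := by
  have hlog : Real.logb 2 x < -Real.logb 2 N + -(a * n) := by
    have := (mul_lt_mul_iff_right₀ hn).mpr h
    field_simp at this
    linarith
  calc x < 2 ^ (-Real.logb 2 N + -(a * n)) := (Real.logb_lt_iff_lt_rpow one_lt_two hx).mp hlog
    _ = N⁻¹ * 2 ^ (-(a * n)) := by
      rw [Real.rpow_add two_pos, Real.rpow_neg zero_le_two, Real.rpow_logb two_pos (by norm_num) hN]

theorem Finset.sum_filter_logb_gt_le {α : Type*} (s : Finset α) (p : α → ℝ) {n : ℝ}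
    (hn : 0 < n) (a : ℝ) :
    ∑ y ∈ s with 0 < p y ∧ 1 / n * Real.logb 2 #s + a < -(1 / n) * Real.logb 2 (p y), p y ≤
      2 ^ (-(a * n)) := by
  obtain rfl | hs := s.eq_empty_or_nonempty
  · rw [filter_empty, sum_empty]
    positivity
  calc _ ≤ #(s.filter _) • ((#s : ℝ)⁻¹ * 2 ^ (-(a * n))) := by
        refine sum_le_card_nsmul _ _ _ fun y hy => ?_
        obtain ⟨-, hpy, hlog⟩ := mem_filter.mp hy
        exact (lt_inv_mul_rpow_of_logb_gt hpy (by exact_mod_cast hs.card_pos) hn hlog).le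
    _ ≤ #s • ((#s : ℝ)⁻¹ * 2 ^ (-(a * n))) :=
      nsmul_le_nsmul_left (by positivity) (card_le_card (filter_subset _ _))
    _ = 2 ^ (-(a * n)) := by
      rw [nsmul_eq_mul, ← mul_assoc, mul_inv_cancel₀ (by exact_mod_cast hs.card_pos.ne'), one_mul]

theorem Finset.sum_sub_sum_filter_le_sum_filter_add {α : Type*} {s : Finset α} {p : α → ℝ}
    (q q₁ q₂ : α → Prop) [DecidablePred q] [DecidablePred q₁] [DecidablePred q₂]
    (hp : ∀ y ∈ s, 0 ≤ p y) (hcover : ∀ y ∈ s, 0 < p y → ¬q y → q₁ y ∨ q₂ y) :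
    ∑ y ∈ s, p y - ∑ y ∈ s with q y, p y ≤
      ∑ y ∈ s with q₁ y, p y + ∑ y ∈ s with q₂ y, p y := by
  rw [← sum_filter_add_sum_filter_not s q, add_sub_cancel_left, sum_filter, sum_filter,
    sum_filter, ← sum_add_distrib]
  refine sum_le_sum fun y hy => ?_
  have := hp y hy
  have := hcover y hy
  split_ifs <;> grind

theorem tendsto_rpow_two_neg_mul_natCast {a : ℝ} (ha : 0 < a) :
    Tendsto (fun n : ℕ => (2 : ℝ) ^ (-(a * n))) atTop (𝓝 0) :=
  (tendsto_rpow_atBot_of_base_gt_one 2 one_lt_two).comp <|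
    tendsto_neg_atTop_atBot.comp <| tendsto_natCast_atTop_atTop.const_mul_atTop ha

theorem tendsto_div_nhds_one_of_sub_le {ι : Type*} {l : Filter ι} {A S E : ι → ℝ} {c : ℝ}
    (hc : 0 < c) (hcS : ∀ i, c ≤ S i) (hAS : ∀ i, A i ≤ S i)
    (hSA : ∀ᶠ i in l, S i - A i ≤ E i) (hE : Tendsto E l (𝓝 0)) :
    Tendsto (fun i => A i / S i) l (𝓝 1) := by
  have hlower : Tendsto (fun i => 1 - E i / c) l (𝓝 1) := by
    simpa using (hE.div_const c).const_sub 1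
  refine tendsto_of_tendsto_of_tendsto_of_le_of_le' hlower tendsto_const_nhds ?_ ?_
  · filter_upwards [hSA] with i hi
    have hS : 0 < S i := hc.trans_le (hcS i)
    calc 1 - E i / c ≤ 1 - (S i - A i) / c := by gcongr
      _ ≤ 1 - (S i - A i) / S i := by gcongr; linarith [hAS i]; exact hcS i
      _ = A i / S i := by field_simp; ring
  · exact Eventually.of_forall fun i => div_le_one_of_le₀ (hAS i) (hc.trans_le (hcS i)).le

theorem purged_typical_set_conditional_prob_tendsto_one_general
    {Y : Type*} [Fintype Y]
    (P : (n : ℕ) → (Fin n → Y) → ℝ)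
    (hP0 : ∀ n y, 0 ≤ P n y)
    (h : (n : ℕ) → (Fin n → Y) → ℝ)
    (G : (n : ℕ) → Finset (Fin n → Y))
    (pG : ℝ) (hpG : 0 < pG)
    (hPG : ∀ n, pG ≤ ∑ y ∈ G n, P n y)
    (hUEP : ∀ δ : ℝ, 0 < δ →
      Tendsto (fun n : ℕ =>
          ∑ y ∈ univ.filter (fun y : Fin n → Y => 0 < P n y ∧
            δ < |(-(1 / (n : ℝ)) * Real.logb 2 (P n y)) - h n y|), P n y)
        atTop (nhds 0))
    (ε : ℝ) (hε : 0 < ε) :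
    Tendsto (fun n : ℕ =>
        (∑ y ∈ (G n).filter (fun y => 0 < P n y ∧
            |(-(1 / (n : ℝ)) * Real.logb 2 (P n y)) - h n y| < ε ∧
            -(1 / (n : ℝ)) * Real.logb 2 (P n y) ≤
              (1 / (n : ℝ)) * Real.logb 2 ((G n).card : ℝ) + ε / 2), P n y) /
          (∑ y ∈ G n, P n y))
      atTop (nhds 1) := by
  have hloss : Tendsto (fun n : ℕ => ∑ y ∈ univ.filter (fun y : Fin n → Y => 0 < P n y ∧
      ε / 2 < |(-(1 / (n : ℝ)) * Real.logb 2 (P n y)) - h n y|), P n y +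
        (2 : ℝ) ^ (-(ε / 2 * n))) atTop (𝓝 0) := by
    simpa using (hUEP (ε / 2) (half_pos hε)).add (tendsto_rpow_two_neg_mul_natCast (half_pos hε))
  refine tendsto_div_nhds_one_of_sub_le hpG hPG
    (fun n => sum_le_sum_of_subset_of_nonneg (filter_subset _ _) fun y _ _ => hP0 n y) ?_ hloss
  filter_upwards [eventually_gt_atTop 0] with n hn
  refine (sum_sub_sum_filter_le_sum_filter_add _
    (fun y => 0 < P n y ∧ ε / 2 < |(-(1 / (n : ℝ)) * Real.logb 2 (P n y)) - h n y|)
    (fun y => 0 < P n y ∧ (1 / (n : ℝ)) * Real.logb 2 (G n).card + ε / 2 <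
      -(1 / (n : ℝ)) * Real.logb 2 (P n y))
    (fun y _ => hP0 n y) ?_).trans
    (add_le_add ?_ (sum_filter_logb_gt_le _ _ (Nat.cast_pos.mpr hn) _))
  · intro y _ hpy hnot
    grind
  · exact sum_le_sum_of_subset_of_nonneg (filter_subset_filter _ (subset_univ _))
      fun y _ _ => hP0 n y

/-- **The purged typical set carries all the conditional probability mass.** Let `Y` be a
finite nonempty token alphabet. For each `n ≥ 1`, let `P_n` be a pmf on `Y^n`,
`h_n : Y^n → ℝ` the empirical entropy, `G(n) ⊆ Y^n` nonempty with
`g(n) = (1/n) log₂ |G(n)|`, and `l_n(y) = −(1/n) log₂ P_n(y)`. Fix `ε > 0` and let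
`𝒫_n(ε) = { y ∈ G(n) : P_n(y) > 0, |l_n(y) − h_n(y)| < ε, l_n(y) ≤ g(n) + ε/2 }`.
Assume (i) `P_n(G(n)) ≥ p_G > 0` for all `n`, and (ii) for every `δ > 0`,
`P_n(|l_n − h_n| > δ) → 0`. Then `P_n(𝒫_n(ε)) / P_n(G(n)) → 1`. -/
theorem purged_typical_set_conditional_prob_tendsto_one
    {Y : Type*} [Fintype Y] [Nonempty Y]
    (P : (n : ℕ) → (Fin n → Y) → ℝ)
    (hP0 : ∀ n y, 0 ≤ P n y) (hP1 : ∀ n, ∑ y, P n y = 1)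
    (h : (n : ℕ) → (Fin n → Y) → ℝ)
    (G : (n : ℕ) → Finset (Fin n → Y)) (hGne : ∀ n, (G n).Nonempty)
    (pG : ℝ) (hpG : 0 < pG)
    (hPG : ∀ n, pG ≤ ∑ y ∈ G n, P n y)
    (hUEP : ∀ δ : ℝ, 0 < δ →
      Tendsto (fun n : ℕ =>
          ∑ y ∈ univ.filter (fun y : Fin n → Y => 0 < P n y ∧
            δ < |(-(1 / (n : ℝ)) * Real.logb 2 (P n y)) - h n y|), P n y)
        atTop (nhds 0))
    (ε : ℝ) (hε : 0 < ε) :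
    Tendsto (fun n : ℕ =>
        (∑ y ∈ (G n).filter (fun y => 0 < P n y ∧
            |(-(1 / (n : ℝ)) * Real.logb 2 (P n y)) - h n y| < ε ∧
            -(1 / (n : ℝ)) * Real.logb 2 (P n y) ≤
              (1 / (n : ℝ)) * Real.logb 2 ((G n).card : ℝ) + ε / 2), P n y) /
          (∑ y ∈ G n, P n y))
      atTop (nhds 1) :=
  purged_typical_set_conditional_prob_tendsto_one_general P hP0 h G pG hpG hPG hUEP ε hε
end
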